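/- Let I ≥ 2 be an integer, set β := (I+1 − log(I+1))/(I+1 + log(I+1)) where log is the natural logarithm, and let B be a nonempty finite set of integers with B ⊆ {1, …, ⌊I/2⌋}. Let W_1, …, W_I be independent square-integrable real random variables with common mean m and E[(W_i − m)²] ≤ σ² for all i, for some σ ≥ 0. For each k ∈ B define Q_k := β^{I−k} W_k + (1−β) Σ_{i=k+1}^{I} β^{I−i} W_i, and let (Y_k)_{k∈B} be integrable real random variables with Y_k ≤ Q_k almost surely for each k ∈ B. Then E[ max_{k∈B} Y_k ] − m ≤ 4σ √(|B|−1) · √(log(I+1)) / √(I+1). -/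

import Mathlib

/-!
Each `Q_k` is `∑ i ∈ [k, I], w_i W_i` with geometric weights `w_i` summing to one, so it has mean
`m` and, by independence, variance `σ² ∑ w_i²`. With `t = log (I+1) / (I+1)` the choice
`β = (1-t)/(1+t)` gives `(1-β)² = t (1-β²)`, hence `∑ w_i² = t + (1-t) β^{2(I-k)}`; since
`2k ≤ I` and `β ≤ 1-t`, the second term is at most `(1-t)^{I+1} ≤ e^{-log (I+1)} ≤ t`.
Finally `max_k Q_k ≤ Q_{k₀} + (∑_{k ≠ k₀} (Q_k - Q_{k₀})²)^{1/2}`, and Cauchy–Schwarz bounds the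
expectation of the square root by `√((|B|-1) · 4 Var)`.
-/

open MeasureTheory ProbabilityTheory Finset

theorem Finset.sup'_le_add_sqrt_sum_sq_sub {ι : Type*} [DecidableEq ι] {B : Finset ι}
    (hB : B.Nonempty) {k₀ : ι} (hk₀ : k₀ ∈ B) (g : ι → ℝ) :
    B.sup' hB g ≤ g k₀ + √(∑ k ∈ B.erase k₀, (g k - g k₀) ^ 2) := by
  refine sup'_le _ _ fun k hk => ?_
  obtain rfl | hne := eq_or_ne k k₀
  · simp
  · have hsq : (g k - g k₀) ^ 2 ≤ ∑ j ∈ B.erase k₀, (g j - g k₀) ^ 2 :=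
      single_le_sum (f := fun j => (g j - g k₀) ^ 2) (fun _ _ => sq_nonneg _)
        (mem_erase.2 ⟨hne, hk⟩)
    linarith [le_abs_self (g k - g k₀), Real.abs_le_sqrt hsq]

theorem one_sub_log_div_pow_le {n : ℕ} (hn : 3 ≤ n) :
    (1 - Real.log n / n) ^ n ≤ Real.log n / n := by
  have hn₀ : (0 : ℝ) < n := by positivity
  have hlog : 1 ≤ Real.log n := by
    rw [Real.le_log_iff_exp_le hn₀]
    have : (3 : ℝ) ≤ n := by exact_mod_cast hn
    linarith [Real.exp_one_lt_d9]
  calc (1 - Real.log n / n) ^ n ≤ Real.exp (-Real.log n) :=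
        Real.one_sub_div_pow_le_exp_neg (Real.log_le_self hn₀.le)
    _ = 1 / n := by rw [Real.exp_neg, Real.exp_log hn₀, one_div]
    _ ≤ Real.log n / n := by gcongr

theorem sum_Icc_pow_tsub (x : ℝ) (k I : ℕ) :
    ∑ i ∈ Icc (k + 1) I, x ^ (I - i) = ∑ j ∈ range (I - k), x ^ j := by
  rw [← Ico_add_one_right_eq_Icc, sum_Ico_reflect _ _ le_rfl, Nat.sub_self,
    Nat.add_sub_add_right, Nat.Ico_zero_eq_range]

/-- The paper's weights `β_i^I` for a fixed `k`, so that `Q_k = ∑ i ∈ [k, I], β_i^I W_i`. -/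
def geomWeight (β : ℝ) (I k i : ℕ) : ℝ :=
  if i = k then β ^ (I - k) else (1 - β) * β ^ (I - i)

theorem sum_Icc_geomWeight {k I : ℕ} (hk : k ≤ I) (β : ℝ) (F : ℕ → ℝ → ℝ) :
    ∑ i ∈ Icc k I, F i (geomWeight β I k i)
      = F k (β ^ (I - k)) + ∑ i ∈ Icc (k + 1) I, F i ((1 - β) * β ^ (I - i)) := by
  rw [← insert_Icc_add_one_left_eq_Icc hk, sum_insert (by simp)]
  congr 1
  · simp [geomWeight]
  · refine sum_congr rfl fun i hi => ?_
    rw [geomWeight, if_neg (by simp only [mem_Icc] at hi; omega)]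

theorem sum_geomWeight (β : ℝ) {k I : ℕ} (hk : k ≤ I) :
    ∑ i ∈ Icc k I, geomWeight β I k i = 1 := by
  rw [sum_Icc_geomWeight hk β fun _ w => w, ← mul_sum, sum_Icc_pow_tsub, mul_neg_geom_sum]
  ring

theorem sum_geomWeight_sq_le {t : ℝ} (ht₀ : 0 < t) (ht₁ : t ≤ 1) {k I : ℕ} (hk : 2 * k ≤ I) :
    ∑ i ∈ Icc k I, geomWeight ((1 - t) / (1 + t)) I k i ^ 2 ≤ t + (1 - t) ^ (I + 1) := by
  set β := (1 - t) / (1 + t)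
  have hβ₀ : 0 ≤ β := div_nonneg (by linarith) (by linarith)
  have hβt : β ≤ 1 - t := by
    rw [div_le_iff₀ (by linarith)]
    nlinarith
  have hβsq : (1 - β) ^ 2 = t * (1 - β ^ 2) := by
    simp only [β]
    field_simp
    ring
  have htail : ∑ i ∈ Icc (k + 1) I, ((1 - β) * β ^ (I - i)) ^ 2
      = t * (1 - (β ^ 2) ^ (I - k)) := by
    simp_rw [mul_pow, ← pow_mul, mul_comm _ 2, pow_mul]
    rw [← mul_sum, sum_Icc_pow_tsub, hβsq, mul_assoc, mul_neg_geom_sum]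
  have hpow : (β ^ 2) ^ (I - k) ≤ (1 - t) ^ I := calc
    (β ^ 2) ^ (I - k) ≤ ((1 - t) ^ 2) ^ (I - k) := by gcongr
    _ = (1 - t) ^ (2 * (I - k)) := by rw [← pow_mul]
    _ ≤ (1 - t) ^ I := pow_le_pow_of_le_one (by linarith) (by linarith) (by omega)
  rw [sum_Icc_geomWeight (by omega) β fun _ w => w ^ 2, htail, ← pow_mul, mul_comm (I - k),
    pow_mul, pow_succ (1 - t) I]
  nlinarith [mul_le_mul_of_nonneg_right hpow (by linarith : 0 ≤ 1 - t)]

theorem sum_geomWeight_sq_le_two_mul_log {I k : ℕ} (hI : 2 ≤ I) (hk : 2 * k ≤ I) :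
    ∑ i ∈ Icc k I, geomWeight (((I : ℝ) + 1 - Real.log ((I : ℝ) + 1))
        / ((I : ℝ) + 1 + Real.log ((I : ℝ) + 1))) I k i ^ 2
      ≤ 2 * (Real.log ((I : ℝ) + 1) / ((I : ℝ) + 1)) := by
  set t := Real.log ((I : ℝ) + 1) / ((I : ℝ) + 1) with ht
  have hI₀ : (0 : ℝ) < (I : ℝ) + 1 := by positivity
  have ht₀ : 0 < t := div_pos (Real.log_pos (by norm_cast; omega)) hI₀
  have ht₁ : t ≤ 1 := (div_le_one hI₀).2 (Real.log_le_self hI₀.le)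
  have htail : (1 - t) ^ (I + 1) ≤ t := by
    simpa only [Nat.cast_succ] using one_sub_log_div_pow_le (n := I + 1) (by omega)
  have hβ : ((I : ℝ) + 1 - Real.log ((I : ℝ) + 1)) / ((I : ℝ) + 1 + Real.log ((I : ℝ) + 1))
      = (1 - t) / (1 + t) := by
    rw [ht]
    field_simp
  rw [hβ]
  linarith [sum_geomWeight_sq_le ht₀ ht₁ hk]

section Probability

variable {Ω : Type*} [MeasurableSpace Ω] {μ : Measure Ω}

theorem integral_le_sqrt_integral_sq [IsProbabilityMeasure μ] {X : Ω → ℝ} (hX : MemLp X 2 μ) :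
    ∫ ω, X ω ∂μ ≤ √(∫ ω, X ω ^ 2 ∂μ) := by
  have h := variance_nonneg X μ
  rw [variance_eq_sub hX, sub_nonneg] at h
  exact (le_abs_self _).trans (Real.abs_le_sqrt h)

theorem integral_sub_sq_le [IsFiniteMeasure μ] {X Y : Ω → ℝ} (hX : MemLp X 2 μ)
    (hY : MemLp Y 2 μ) (m : ℝ) :
    ∫ ω, (X ω - Y ω) ^ 2 ∂μ ≤ 2 * ∫ ω, (X ω - m) ^ 2 ∂μ + 2 * ∫ ω, (Y ω - m) ^ 2 ∂μ := by
  have hXm : Integrable (fun ω => (X ω - m) ^ 2) μ := (hX.sub (memLp_const m)).integrable_sq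
  have hYm : Integrable (fun ω => (Y ω - m) ^ 2) μ := (hY.sub (memLp_const m)).integrable_sq
  rw [← integral_const_mul, ← integral_const_mul,
    ← integral_add (hXm.const_mul 2) (hYm.const_mul 2)]
  refine integral_mono (hX.sub hY).integrable_sq ((hXm.const_mul 2).add (hYm.const_mul 2))
    fun ω => ?_
  nlinarith [sq_nonneg (X ω + Y ω - 2 * m)]

theorem integrable_finsetSup' {ι : Type*} {B : Finset ι} (hB : B.Nonempty) {X : ι → Ω → ℝ}
    (hX : ∀ k ∈ B, Integrable (X k) μ) : Integrable (fun ω => B.sup' hB fun k => X k ω) μ := by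
  convert sup'_induction (p := fun f => Integrable f μ) hB X (fun _ hf _ hg => hf.sup hg) hX
    using 1
  ext ω
  exact (Finset.sup'_apply hB X ω).symm

theorem integral_finsetSup'_mono {ι : Type*} {B : Finset ι} (hB : B.Nonempty)
    {X Y : ι → Ω → ℝ} (hX : ∀ k ∈ B, Integrable (X k) μ) (hY : ∀ k ∈ B, Integrable (Y k) μ)
    (hXY : ∀ k ∈ B, ∀ᵐ ω ∂μ, X k ω ≤ Y k ω) :
    ∫ ω, B.sup' hB (fun k => X k ω) ∂μ ≤ ∫ ω, B.sup' hB (fun k => Y k ω) ∂μ := by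
  refine integral_mono_ae (integrable_finsetSup' hB hX) (integrable_finsetSup' hB hY) ?_
  filter_upwards [(Filter.eventually_all_finset B).2 hXY] with ω hω
  exact sup'_mono_fun hω

theorem integral_sup'_le_add_mul_sqrt [IsProbabilityMeasure μ] {ι : Type*} [DecidableEq ι]
    {B : Finset ι} (hB : B.Nonempty) {X : ι → Ω → ℝ} (hX : ∀ k ∈ B, MemLp (X k) 2 μ)
    {m s : ℝ} (hs : 0 ≤ s) (hm : ∀ k ∈ B, ∫ ω, X k ω ∂μ = m) (hv : ∀ k ∈ B, Var[X k; μ] ≤ s ^ 2) :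
    ∫ ω, B.sup' hB (fun k => X k ω) ∂μ ≤ m + 2 * s * √(#B - 1) := by
  obtain ⟨k₀, hk₀⟩ := hB
  set S : Ω → ℝ := fun ω => ∑ k ∈ B.erase k₀, (X k ω - X k₀ ω) ^ 2
  have hS₀ : ∀ ω, 0 ≤ S ω := fun ω => sum_nonneg fun _ _ => sq_nonneg _
  have hdiffInt : ∀ k ∈ B, Integrable (fun ω => (X k ω - X k₀ ω) ^ 2) μ := fun k hk =>
    ((hX k hk).sub (hX k₀ hk₀)).integrable_sq
  have hSint : Integrable S μ :=
    integrable_finsetSum _ fun k hk => hdiffInt k (mem_of_mem_erase hk)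
  have hsqrtS : MemLp (fun ω => √(S ω)) 2 μ := by
    rw [memLp_two_iff_integrable_sq (Real.continuous_sqrt.comp_aestronglyMeasurable
      hSint.aestronglyMeasurable)]
    exact hSint.congr (ae_of_all _ fun ω => (Real.sq_sqrt (hS₀ ω)).symm)
  have hdiff : ∀ k ∈ B, ∫ ω, (X k ω - X k₀ ω) ^ 2 ∂μ ≤ 4 * s ^ 2 := by
    have hvar : ∀ j ∈ B, ∫ ω, (X j ω - m) ^ 2 ∂μ ≤ s ^ 2 := fun j hj => by
      rw [← hm j hj, ← variance_eq_integral (hX j hj).aemeasurable]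
      exact hv j hj
    intro k hk
    linarith [integral_sub_sq_le (hX k hk) (hX k₀ hk₀) m, hvar k hk, hvar k₀ hk₀]
  calc ∫ ω, B.sup' ⟨k₀, hk₀⟩ (fun k => X k ω) ∂μ ≤ ∫ ω, X k₀ ω + √(S ω) ∂μ :=
        integral_mono (integrable_finsetSup' _ fun k hk => (hX k hk).integrable one_le_two)
          (((hX k₀ hk₀).integrable one_le_two).add (hsqrtS.integrable one_le_two))
          fun ω => sup'_le_add_sqrt_sum_sq_sub _ hk₀ _
    _ = m + ∫ ω, √(S ω) ∂μ := by
        rw [integral_add ((hX k₀ hk₀).integrable one_le_two) (hsqrtS.integrable one_le_two),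
          hm k₀ hk₀]
    _ ≤ m + √(∫ ω, S ω ∂μ) := by
        gcongr
        refine (integral_le_sqrt_integral_sq hsqrtS).trans_eq ?_
        simp_rw [Real.sq_sqrt (hS₀ _)]
    _ ≤ m + √(4 * s ^ 2 * (#B - 1)) := by
        gcongr
        rw [integral_finsetSum _ fun k hk => hdiffInt k (mem_of_mem_erase hk),
          ← cast_card_erase_of_mem hk₀, mul_comm, ← nsmul_eq_mul]
        exact sum_le_card_nsmul _ _ _ fun k hk => hdiff k (mem_of_mem_erase hk)
    _ = m + 2 * s * √(#B - 1) := by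
        rw [Real.sqrt_mul (by positivity), show 4 * s ^ 2 = (2 * s) ^ 2 by ring,
          Real.sqrt_sq (by positivity)]

theorem integral_sum_mul_of_integral_eq {ι : Type*} {s : Finset ι} {X : ι → Ω → ℝ}
    (hX : ∀ i ∈ s, Integrable (X i) μ) {m : ℝ} (hm : ∀ i ∈ s, ∫ ω, X i ω ∂μ = m) (c : ι → ℝ) :
    ∫ ω, ∑ i ∈ s, c i * X i ω ∂μ = (∑ i ∈ s, c i) * m := by
  rw [integral_finsetSum _ fun i hi => (hX i hi).const_mul _, sum_mul]
  exact sum_congr rfl fun i hi => by rw [integral_const_mul, hm i hi]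

theorem variance_sum_mul_le {ι : Type*} {s : Finset ι} {X : ι → Ω → ℝ}
    (hX : ∀ i ∈ s, MemLp (X i) 2 μ) (hind : Set.Pairwise s fun i j => IndepFun (X i) (X j) μ)
    {v : ℝ} (hv : ∀ i ∈ s, Var[X i; μ] ≤ v) (c : ι → ℝ) :
    Var[fun ω => ∑ i ∈ s, c i * X i ω; μ] ≤ (∑ i ∈ s, c i ^ 2) * v := by
  have hsum : (fun ω => ∑ i ∈ s, c i * X i ω) = ∑ i ∈ s, c i • X i := by
    ext ω
    simp [Finset.sum_apply]
  have hind' : Set.Pairwise s fun i j => IndepFun (c i • X i) (c j • X j) μ :=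
    fun i hi j hj hij =>
      (hind hi hj hij).comp (measurable_const_mul (c i)) (measurable_const_mul (c j))
  rw [hsum, IndepFun.variance_sum (fun i hi => (hX i hi).const_smul _) hind', sum_mul]
  refine sum_le_sum fun i hi => ?_
  rw [variance_smul]
  exact mul_le_mul_of_nonneg_left (hv i hi) (sq_nonneg _)

theorem ProbabilityTheory.iIndepFun.pairwise_indepFun_of_subtype {ι : Type*} {s : Finset ι}
    {X : ι → Ω → ℝ} (h : iIndepFun (fun i : s => X i) μ) :
    Set.Pairwise (s : Set ι) fun i j => IndepFun (X i) (X j) μ :=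
  fun i hi j hj hij =>
    h.indepFun (i := ⟨i, hi⟩) (j := ⟨j, hj⟩) fun h => hij (congrArg Subtype.val h)

end Probability

theorem stmt6_general {Ω : Type*} [MeasurableSpace Ω] {μ : Measure Ω}
    [IsProbabilityMeasure μ]
    (I : ℕ) (hI : 2 ≤ I)
    (β : ℝ)
    (hβ : β = ((I : ℝ) + 1 - Real.log ((I : ℝ) + 1))
        / ((I : ℝ) + 1 + Real.log ((I : ℝ) + 1)))
    (B : Finset ℕ) (hBne : B.Nonempty) (hBsub : ∀ k ∈ B, 1 ≤ k ∧ k ≤ I / 2)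
    (W : ℕ → Ω → ℝ)
    (hindep : iIndepFun
      (fun i : {x // x ∈ Finset.Icc 1 I} => W i.1) μ)
    (m σ : ℝ) (hσ : 0 ≤ σ)
    (hW2 : ∀ i, 1 ≤ i → i ≤ I → MemLp (W i) 2 μ)
    (hWmean : ∀ i, 1 ≤ i → i ≤ I → (∫ ω, W i ω ∂μ) = m)
    (hWvar : ∀ i, 1 ≤ i → i ≤ I → (∫ ω, (W i ω - m) ^ 2 ∂μ) ≤ σ ^ 2)
    (Q : ℕ → Ω → ℝ)
    (hQ : ∀ k ∈ B, ∀ ω, Q k ω = β ^ (I - k) * W k ω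
        + (1 - β) * ∑ i ∈ Finset.Icc (k + 1) I, β ^ (I - i) * W i ω)
    (Y : ℕ → Ω → ℝ)
    (hYint : ∀ k ∈ B, Integrable (Y k) μ)
    (hYQ : ∀ k ∈ B, ∀ᵐ ω ∂μ, Y k ω ≤ Q k ω) :
    (∫ ω, (B.sup' hBne fun k => Y k ω) ∂μ) - m
      ≤ 4 * σ * Real.sqrt ((B.card : ℝ) - 1)
          * Real.sqrt (Real.log ((I : ℝ) + 1)) / Real.sqrt ((I : ℝ) + 1) := by
  set t := Real.log ((I : ℝ) + 1) / ((I : ℝ) + 1) with ht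
  have hI₀ : (0 : ℝ) < (I : ℝ) + 1 := by positivity
  have ht₀ : 0 ≤ t := div_nonneg (Real.log_nonneg (by linarith)) hI₀.le
  have hW : ∀ i ∈ Icc 1 I, MemLp (W i) 2 μ ∧ ∫ ω, W i ω ∂μ = m ∧ Var[W i; μ] ≤ σ ^ 2 := by
    intro i hi
    obtain ⟨h₁, h₂⟩ := mem_Icc.1 hi
    refine ⟨hW2 i h₁ h₂, hWmean i h₁ h₂, ?_⟩
    rw [variance_eq_integral (hW2 i h₁ h₂).aemeasurable, hWmean i h₁ h₂]
    exact hWvar i h₁ h₂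
  have hQk : ∀ k ∈ B,
      MemLp (Q k) 2 μ ∧ ∫ ω, Q k ω ∂μ = m ∧ Var[Q k; μ] ≤ (2 * σ * √t) ^ 2 := by
    intro k hk
    obtain ⟨hk₁, hk₂⟩ := hBsub k hk
    have hsub : Icc k I ⊆ Icc 1 I := Icc_subset_Icc_left hk₁
    have hQsum : Q k = fun ω => ∑ i ∈ Icc k I, geomWeight β I k i * W i ω := by
      ext ω
      rw [hQ k hk ω, sum_Icc_geomWeight (by omega) β fun i w => w * W i ω, mul_sum]
      simp_rw [mul_assoc]
    rw [hQsum, mul_pow, Real.sq_sqrt ht₀]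
    refine ⟨memLp_finsetSum _ fun i hi => (hW i (hsub hi)).1.const_mul _, ?_, ?_⟩
    · rw [integral_sum_mul_of_integral_eq (fun i hi => (hW i (hsub hi)).1.integrable one_le_two)
        (fun i hi => (hW i (hsub hi)).2.1), sum_geomWeight β (by omega), one_mul]
    · refine (variance_sum_mul_le (fun i hi => (hW i (hsub hi)).1)
        (hindep.pairwise_indepFun_of_subtype.mono (coe_subset.2 hsub))
        (fun i hi => (hW i (hsub hi)).2.2) _).trans ?_
      rw [hβ]
      nlinarith [sum_geomWeight_sq_le_two_mul_log hI (by omega : 2 * k ≤ I), sq_nonneg σ]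
  have hQ2 : ∀ k ∈ B, MemLp (Q k) 2 μ := fun k hk => (hQk k hk).1
  calc _ ≤ ∫ ω, (B.sup' hBne fun k => Q k ω) ∂μ - m := sub_le_sub_right
        (integral_finsetSup'_mono hBne hYint (fun k hk => (hQ2 k hk).integrable one_le_two) hYQ) m
    _ ≤ 2 * (2 * σ * √t) * √(#B - 1) := by
        linarith [integral_sup'_le_add_mul_sqrt hBne hQ2 (by positivity)
          (fun k hk => (hQk k hk).2.1) (fun k hk => (hQk k hk).2.2)]
    _ = _ := by
        rw [ht, Real.sqrt_div' _ hI₀.le]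
        ring

/-- Noise bound for the max-one-cut model: if each `Y_k` is dominated by the
geometric convex combination `Q_k = β^{I-k} W_k + (1-β) Σ_{i=k+1}^I β^{I-i} W_i`
of independent variables with mean `m` and variance at most `σ²`, then
`E[max_{k ∈ B} Y_k] - m ≤ 4 σ √(|B|-1) √(log(I+1)) / √(I+1)`. -/
theorem stmt6 {Ω : Type*} [MeasurableSpace Ω] {μ : Measure Ω}
    [IsProbabilityMeasure μ]
    (I : ℕ) (hI : 2 ≤ I)
    (β : ℝ)
    (hβ : β = ((I : ℝ) + 1 - Real.log ((I : ℝ) + 1))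
        / ((I : ℝ) + 1 + Real.log ((I : ℝ) + 1)))
    (B : Finset ℕ) (hBne : B.Nonempty) (hBsub : ∀ k ∈ B, 1 ≤ k ∧ k ≤ I / 2)
    (W : ℕ → Ω → ℝ)
    (hWmeas : ∀ i, 1 ≤ i → i ≤ I → Measurable (W i))
    (hindep : iIndepFun
      (fun i : {x // x ∈ Finset.Icc 1 I} => W i.1) μ)
    (m σ : ℝ) (hσ : 0 ≤ σ)
    (hW2 : ∀ i, 1 ≤ i → i ≤ I → MemLp (W i) 2 μ)
    (hWmean : ∀ i, 1 ≤ i → i ≤ I → (∫ ω, W i ω ∂μ) = m)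
    (hWvar : ∀ i, 1 ≤ i → i ≤ I → (∫ ω, (W i ω - m) ^ 2 ∂μ) ≤ σ ^ 2)
    (Q : ℕ → Ω → ℝ)
    (hQ : ∀ k ∈ B, ∀ ω, Q k ω = β ^ (I - k) * W k ω
        + (1 - β) * ∑ i ∈ Finset.Icc (k + 1) I, β ^ (I - i) * W i ω)
    (Y : ℕ → Ω → ℝ)
    (hYint : ∀ k ∈ B, Integrable (Y k) μ)
    (hYQ : ∀ k ∈ B, ∀ᵐ ω ∂μ, Y k ω ≤ Q k ω) :
    (∫ ω, (B.sup' hBne fun k => Y k ω) ∂μ) - m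
      ≤ 4 * σ * Real.sqrt ((B.card : ℝ) - 1)
          * Real.sqrt (Real.log ((I : ℝ) + 1)) / Real.sqrt ((I : ℝ) + 1) :=
  stmt6_general I hI β hβ B hBne hBsub W hindep m σ hσ hW2 hWmean hWvar Q hQ Y hYint hYQ
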